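/- arXiv:2102.10373 — 7 statements merged into one kernel-verified Lean document; each statement's English description precedes it below -/
import Mathlib

section
/- For any n×m real matrix X (with n ≤ m) and any integer r with 1 ≤ r ≤ n, the sum of the singular values from index r to n minus the Euclidean norm of the vector of singular values from index r to n is bounded below by half of the sum of singular values from index r+1 to n, and bounded above by the sum of singular values from index r+1 to n. That is, (1/2)·∑_{i=r+1}^n σ_i(X) ≤ ∑_{i=r}^n σ_i(X) − √(∑_{i=r}^n σ_i(X)²) ≤ ∑_{i=r+1}^n σ_i(X). -/
/-!
Write `a = σ r` and `x_i = σ i` for `r < i ≤ n`, so that `0 ≤ x_i ≤ a`. Then `∑ x_i² ≤ a ∑ x_i`,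
whence `a ≤ √(a² + ∑ x_i²) ≤ a + (∑ x_i) / 2`; subtracting from `a + ∑ x_i` gives both bounds.
-/

/-- Singular values of a real `n × m` matrix (in some order), defined as the square
roots of the eigenvalues of `X * Xᴴ`. -/
noncomputable def singVals {n m : ℕ} (X : Matrix (Fin n) (Fin m) ℝ) (i : Fin n) : ℝ :=
  Real.sqrt ((Matrix.isHermitian_mul_conjTranspose_self X).eigenvalues i)

open Finset

lemma Finset.sum_sq_le_mul_sum {ι : Type*} (s : Finset ι) (f : ι → ℝ) {a : ℝ}
    (hf : ∀ i ∈ s, 0 ≤ f i ∧ f i ≤ a) :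
    ∑ i ∈ s, f i ^ 2 ≤ a * ∑ i ∈ s, f i := by
  rw [mul_sum]
  refine sum_le_sum fun i hi => ?_
  rw [sq]
  exact mul_le_mul_of_nonneg_right (hf i hi).2 (hf i hi).1

lemma Real.sqrt_sq_add_le_add_half {a s t : ℝ} (ha : 0 ≤ a) (hs : 0 ≤ s) (ht : t ≤ a * s) :
    √(a ^ 2 + t) ≤ a + s / 2 :=
  Real.sqrt_le_iff.mpr ⟨by linarith, by nlinarith⟩

section HeadAndTail

variable {ι : Type*} (s : Finset ι) (f : ι → ℝ) (a : ℝ)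

lemma add_sum_sub_sqrt_le_sum :
    a + ∑ i ∈ s, f i - √(a ^ 2 + ∑ i ∈ s, f i ^ 2) ≤ ∑ i ∈ s, f i := by
  have : a ≤ √(a ^ 2 + ∑ i ∈ s, f i ^ 2) :=
    Real.le_sqrt_of_sq_le (le_add_of_nonneg_right (sum_nonneg fun i _ => sq_nonneg (f i)))
  linarith

lemma half_sum_le_add_sum_sub_sqrt (ha : 0 ≤ a) (hf : ∀ i ∈ s, 0 ≤ f i ∧ f i ≤ a) :
    (1 / 2) * ∑ i ∈ s, f i ≤ a + ∑ i ∈ s, f i - √(a ^ 2 + ∑ i ∈ s, f i ^ 2) := by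
  have := Real.sqrt_sq_add_le_add_half ha (sum_nonneg fun i hi => (hf i hi).1)
    (s.sum_sq_le_mul_sum f hf)
  linarith

end HeadAndTail

theorem stmt0_general (n r : ℕ) (hr1 : 1 ≤ r) (hrn : r ≤ n)
    (σ : ℕ → ℝ)
    (hnonneg : ∀ i, 1 ≤ i → i ≤ n → 0 ≤ σ i)
    (hmono : ∀ i j, 1 ≤ i → i ≤ j → j ≤ n → σ j ≤ σ i) :
    (1 / 2) * (∑ i ∈ Finset.Icc (r + 1) n, σ i) ≤
        (∑ i ∈ Finset.Icc r n, σ i) - Real.sqrt (∑ i ∈ Finset.Icc r n, (σ i) ^ 2) ∧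
      (∑ i ∈ Finset.Icc r n, σ i) - Real.sqrt (∑ i ∈ Finset.Icc r n, (σ i) ^ 2) ≤
        ∑ i ∈ Finset.Icc (r + 1) n, σ i := by
  have hsplit (g : ℕ → ℝ) : ∑ i ∈ Icc r n, g i = g r + ∑ i ∈ Icc (r + 1) n, g i := by
    rw [Icc_add_one_left_eq_Ioc, add_sum_Ioc_eq_sum_Icc hrn]
  have htail : ∀ i ∈ Icc (r + 1) n, 0 ≤ σ i ∧ σ i ≤ σ r := fun i hi => by
    obtain ⟨hri, hin⟩ := mem_Icc.mp hi
    exact ⟨hnonneg i (by omega) hin, hmono r i hr1 (by omega) hin⟩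
  rw [hsplit σ, hsplit (σ · ^ 2)]
  exact ⟨half_sum_le_add_sum_sub_sqrt _ σ _ (hnonneg r hr1 hrn) htail,
    add_sum_sub_sqrt_le_sum _ σ _⟩

/-- for the nonincreasingly ordered singular values `σ 1 ≥ ⋯ ≥ σ n ≥ 0`
of a real `n × m` matrix `X` (with `n ≤ m`) and `1 ≤ r ≤ n`,
`(1/2)·∑_{i=r+1}^n σ i ≤ ∑_{i=r}^n σ i − √(∑_{i=r}^n (σ i)²) ≤ ∑_{i=r+1}^n σ i`. -/
theorem stmt0 (n m r : ℕ) (hnm : n ≤ m) (hr1 : 1 ≤ r) (hrn : r ≤ n)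
    (X : Matrix (Fin n) (Fin m) ℝ) (σ : ℕ → ℝ)
    (hσ : ∃ e : Equiv.Perm (Fin n), ∀ i : Fin n, σ (i.1 + 1) = singVals X (e i))
    (hnonneg : ∀ i, 1 ≤ i → i ≤ n → 0 ≤ σ i)
    (hmono : ∀ i j, 1 ≤ i → i ≤ j → j ≤ n → σ j ≤ σ i) :
    (1 / 2) * (∑ i ∈ Finset.Icc (r + 1) n, σ i) ≤
        (∑ i ∈ Finset.Icc r n, σ i) - Real.sqrt (∑ i ∈ Finset.Icc r n, (σ i) ^ 2) ∧
      (∑ i ∈ Finset.Icc r n, σ i) - Real.sqrt (∑ i ∈ Finset.Icc r n, (σ i) ^ 2) ≤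
        ∑ i ∈ Finset.Icc (r + 1) n, σ i :=
  stmt0_general n r hr1 hrn σ hnonneg hmono
end

section
/- Let Ω be a closed subset of a finite-dimensional matrix space 𝕏 and Λ_r = {X ∈ 𝕏 : rank(X) ≤ r}. Let Γ_r = Ω ∩ Λ_r. If there exist γ ≥ 0 and δ > 0 such that dist(X, Γ_r) ≤ γ·[dist(X, Ω) + dist(X, Λ_r)] for all X in the closed ball B(X̄, δ) around a point X̄ ∈ Γ_r, then the multifunction F_r(X,Y) = {X − Y} if (X,Y) ∈ Ω × Λ_r and ∅ otherwise, is metrically subregular at (X̄, X̄) for the origin: there exist κ ≥ 0 and ε > 0 such that dist((X,Y), F_r^{-1}(0)) ≤ κ·dist(0, F_r(X,Y)) for all (X,Y) ∈ B((X̄,X̄), ε) ∩ (Ω × Λ_r). -/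
/-!
Fix `X ∈ Ω` and `Y ∈ Λ_r` near `(X̄, X̄)`. Any `Z ∈ Γ_r` gives the point `(Z, Z)` of
`F_r⁻¹(0)`, whose distance from `(X, Y)` is at most `dist(X, Z) + ‖X - Y‖`. Since
`dist(X, Ω) = 0` and `dist(X, Λ_r) ≤ ‖X - Y‖`, the error bound gives
`dist(X, Γ_r) ≤ γ ‖X - Y‖`, hence metric subregularity with `κ = γ + 1`.
-/

open Metric

attribute [local instance] Matrix.frobeniusNormedAddCommGroup

section Diagonal

variable {α : Type*} [PseudoMetricSpace α]

theorem isometry_diag : Isometry (fun z : α => (z, z)) :=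
  Isometry.of_dist_eq fun z w => by simp only [Prod.dist_eq, max_self]

theorem infDist_diag_le (A B : Set α) (x y : α) :
    infDist (x, y) {p : α × α | p.1 ∈ A ∧ p.2 ∈ B ∧ p.1 = p.2} ≤
      infDist x (A ∩ B) + dist x y := by
  have hdiag : {p : α × α | p.1 ∈ A ∧ p.2 ∈ B ∧ p.1 = p.2} = (fun z => (z, z)) '' (A ∩ B) := by
    ext ⟨u, v⟩
    constructor
    · rintro ⟨hu, hv, huv : u = v⟩
      subst huv
      exact ⟨u, ⟨hu, hv⟩, rfl⟩
    · rintro ⟨z, ⟨hzA, hzB⟩, hz⟩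
      cases hz
      exact ⟨hzA, hzB, rfl⟩
  calc infDist (x, y) {p : α × α | p.1 ∈ A ∧ p.2 ∈ B ∧ p.1 = p.2}
      ≤ infDist (x, x) ((fun z => (z, z)) '' (A ∩ B)) + dist (x, y) (x, x) := by
        rw [hdiag]; exact infDist_le_infDist_add_dist
    _ = infDist x (A ∩ B) + dist x y := by
        rw [infDist_image (x := x) isometry_diag, Prod.dist_eq, dist_self, dist_comm y x,
          max_eq_right dist_nonneg]

end Diagonal

theorem stmt3_general (n m r : ℕ) (Ω : Set (Matrix (Fin n) (Fin m) ℝ))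
    (Xbar : Matrix (Fin n) (Fin m) ℝ)
    (hEB : ∃ γ ≥ (0:ℝ), ∃ δ > (0:ℝ), ∀ X ∈ Metric.closedBall Xbar δ,
      Metric.infDist X (Ω ∩ {X : Matrix (Fin n) (Fin m) ℝ | X.rank ≤ r}) ≤
        γ * (Metric.infDist X Ω +
          Metric.infDist X {X : Matrix (Fin n) (Fin m) ℝ | X.rank ≤ r})) :
    ∃ κ ≥ (0:ℝ), ∃ ε > (0:ℝ), ∀ X Y : Matrix (Fin n) (Fin m) ℝ,
      X ∈ Ω → Y.rank ≤ r → dist (X, Y) (Xbar, Xbar) ≤ ε →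
      Metric.infDist (X, Y)
          {p : Matrix (Fin n) (Fin m) ℝ × Matrix (Fin n) (Fin m) ℝ |
            p.1 ∈ Ω ∧ p.2.rank ≤ r ∧ p.1 = p.2} ≤ κ * dist X Y := by
  obtain ⟨γ, hγ, δ, hδ, hEB⟩ := hEB
  refine ⟨γ + 1, by linarith, δ, hδ, fun X Y hX hY hXY => ?_⟩
  have hX_ball : X ∈ closedBall Xbar δ :=
    mem_closedBall.2 ((le_max_left _ _).trans hXY)
  have hΓ := hEB X hX_ball
  rw [infDist_zero_of_mem hX, zero_add] at hΓ
  calc _ ≤ infDist X (Ω ∩ {X : Matrix (Fin n) (Fin m) ℝ | X.rank ≤ r}) + dist X Y :=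
        infDist_diag_le _ _ X Y
    _ ≤ γ * dist X Y + dist X Y := by
        gcongr
        exact hΓ.trans (mul_le_mul_of_nonneg_left (infDist_le_dist_of_mem hY) hγ)
    _ = (γ + 1) * dist X Y := by ring

/-- if the composite rank constraint set `Γ_r = Ω ∩ Λ_r` (with
`Λ_r = {X : rank X ≤ r}`) admits a local error bound
`dist(X, Γ_r) ≤ γ(dist(X, Ω) + dist(X, Λ_r))` near `X̄ ∈ Γ_r`, then the multifunction
`F_r(X,Y) = {X − Y}` on `Ω × Λ_r` is metrically subregular at `(X̄, X̄)` for `0`. -/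
theorem stmt3 (n m r : ℕ) (Ω : Set (Matrix (Fin n) (Fin m) ℝ)) (hΩ : IsClosed Ω)
    (Xbar : Matrix (Fin n) (Fin m) ℝ)
    (hXbar : Xbar ∈ Ω ∩ {X : Matrix (Fin n) (Fin m) ℝ | X.rank ≤ r})
    (hEB : ∃ γ ≥ (0:ℝ), ∃ δ > (0:ℝ), ∀ X ∈ Metric.closedBall Xbar δ,
      Metric.infDist X (Ω ∩ {X : Matrix (Fin n) (Fin m) ℝ | X.rank ≤ r}) ≤
        γ * (Metric.infDist X Ω +
          Metric.infDist X {X : Matrix (Fin n) (Fin m) ℝ | X.rank ≤ r})) :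
    ∃ κ ≥ (0:ℝ), ∃ ε > (0:ℝ), ∀ X Y : Matrix (Fin n) (Fin m) ℝ,
      X ∈ Ω → Y.rank ≤ r → dist (X, Y) (Xbar, Xbar) ≤ ε →
      Metric.infDist (X, Y)
          {p : Matrix (Fin n) (Fin m) ℝ × Matrix (Fin n) (Fin m) ℝ |
            p.1 ∈ Ω ∧ p.2.rank ≤ r ∧ p.1 = p.2} ≤ κ * dist X Y :=
  stmt3_general n m r Ω Xbar hEB
end

section
/- Let Ω and Λ_r be closed subsets of a finite-dimensional normed space with Γ_r = Ω ∩ Λ_r nonempty. If the mapping F_r(X,Y) = {X − Y} for (X,Y) ∈ Ω × Λ_r (and ∅ otherwise) is metrically subregular at (X̄, X̄) for the origin with constant κ and radius ε, then for every X ∈ B(X̄, ε/4) one has dist(X, Γ_r) ≤ (1 + κ)·[dist(X, Ω) + dist(X, Λ_r)]. -/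
/-!
Project `X` onto `Ω` and onto `Λ`, giving nearest points `P` and `Q`. Both lie within `ε / 2` of
`X̄`, so `(P, Q)` is in the ball where subregularity applies: the diagonal of `(Ω ∩ Λ)²` comes
within `κ ‖P - Q‖` of `(P, Q)`, and `‖P - Q‖ ≤ dist(X, Ω) + dist(X, Λ)`. Since the first
projection is 1-Lipschitz, `dist(X, Ω ∩ Λ) ≤ ‖X - P‖ + dist(P, Ω ∩ Λ)
≤ dist(X, Ω) + κ (dist(X, Ω) + dist(X, Λ))`.
-/

namespace Metric

variable {α β : Type*} [PseudoMetricSpace α] [PseudoMetricSpace β]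

theorem infDist_fst_le_infDist {s : Set α} {t : Set (α × β)} (ht : t.Nonempty)
    (hts : Set.MapsTo Prod.fst t s) (p : α × β) : infDist p.1 s ≤ infDist p t :=
  (le_infDist ht).2 fun _ hq =>
    (infDist_le_dist_of_mem (hts hq)).trans ((le_max_left _ _).trans_eq Prod.dist_eq.symm)

theorem infDist_inter_le_add_infDist_diag {Ω Λ : Set α} {z : α} (hz : z ∈ Ω ∩ Λ) (x P Q : α) :
    infDist x (Ω ∩ Λ) ≤
      dist x P + infDist (P, Q) {p : α × α | p.1 ∈ Ω ∧ p.2 ∈ Λ ∧ p.1 = p.2} :=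
  calc infDist x (Ω ∩ Λ) ≤ infDist P (Ω ∩ Λ) + dist x P := infDist_le_infDist_add_dist
    _ ≤ infDist (P, Q) {p : α × α | p.1 ∈ Ω ∧ p.2 ∈ Λ ∧ p.1 = p.2} + dist x P := by
        gcongr
        refine infDist_fst_le_infDist ⟨(z, z), show _ ∧ _ ∧ _ from ⟨hz.1, hz.2, rfl⟩⟩ ?_ (P, Q)
        rintro p ⟨h₁, h₂, h₁₂⟩
        exact ⟨h₁, h₁₂ ▸ h₂⟩
    _ = _ := add_comm _ _

end Metric

open Metric

theorem stmt4_general {E : Type*} [NormedAddCommGroup E] [NormedSpace ℝ E] [FiniteDimensional ℝ E]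
    (Ω Λ : Set E) (hΩ : IsClosed Ω) (hΛ : IsClosed Λ)
    (Xbar : E) (hXbar : Xbar ∈ Ω ∩ Λ) (κ ε : ℝ) (hκ : 0 ≤ κ)
    (hsub : ∀ X Y : E, X ∈ Ω → Y ∈ Λ → dist (X, Y) (Xbar, Xbar) ≤ ε →
      Metric.infDist (X, Y) {p : E × E | p.1 ∈ Ω ∧ p.2 ∈ Λ ∧ p.1 = p.2} ≤ κ * dist X Y) :
    ∀ X ∈ Metric.closedBall Xbar (ε / 4),
      Metric.infDist X (Ω ∩ Λ) ≤ (1 + κ) * (Metric.infDist X Ω + Metric.infDist X Λ) := by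
  intro X hX
  rw [mem_closedBall'] at hX
  obtain ⟨P, hPΩ, hP⟩ := hΩ.exists_infDist_eq_dist ⟨Xbar, hXbar.1⟩ X
  obtain ⟨Q, hQΛ, hQ⟩ := hΛ.exists_infDist_eq_dist ⟨Xbar, hXbar.2⟩ X
  have near_Xbar {S : Set E} {Y : E} (hS : Xbar ∈ S) (hY : infDist X S = dist X Y) :
      dist Y Xbar ≤ ε := by
    have : dist X Y ≤ dist X Xbar := hY ▸ infDist_le_dist_of_mem hS
    linarith [dist_triangle_left Y Xbar X, dist_comm X Xbar, (dist_nonneg : 0 ≤ dist X Xbar)]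
  have hball : dist (P, Q) (Xbar, Xbar) ≤ ε :=
    max_le (near_Xbar hXbar.1 hP) (near_Xbar hXbar.2 hQ)
  have hPQ : dist P Q ≤ infDist X Ω + infDist X Λ := hP ▸ hQ ▸ dist_triangle_left P Q X
  calc infDist X (Ω ∩ Λ)
      ≤ dist X P + infDist (P, Q) {p : E × E | p.1 ∈ Ω ∧ p.2 ∈ Λ ∧ p.1 = p.2} :=
        infDist_inter_le_add_infDist_diag hXbar X P Q
    _ ≤ infDist X Ω + κ * (infDist X Ω + infDist X Λ) := by
        rw [← hP]
        gcongr
        exact (hsub P Q hPΩ hQΛ hball).trans (by gcongr)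
    _ ≤ (1 + κ) * (infDist X Ω + infDist X Λ) := by nlinarith [infDist_nonneg (x := X) (s := Λ)]

/-- if `F_r(X,Y) = {X − Y}` on `Ω × Λ` is metrically subregular at
`(X̄, X̄)` for the origin with constant `κ` and radius `ε`, then for every
`X ∈ B(X̄, ε/4)` one has `dist(X, Ω ∩ Λ) ≤ (1 + κ)(dist(X, Ω) + dist(X, Λ))`. -/
theorem stmt4 {E : Type*} [NormedAddCommGroup E] [NormedSpace ℝ E] [FiniteDimensional ℝ E]
    (Ω Λ : Set E) (hΩ : IsClosed Ω) (hΛ : IsClosed Λ) (hne : (Ω ∩ Λ).Nonempty)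
    (Xbar : E) (hXbar : Xbar ∈ Ω ∩ Λ) (κ ε : ℝ) (hκ : 0 ≤ κ) (hε : 0 < ε)
    (hsub : ∀ X Y : E, X ∈ Ω → Y ∈ Λ → dist (X, Y) (Xbar, Xbar) ≤ ε →
      Metric.infDist (X, Y) {p : E × E | p.1 ∈ Ω ∧ p.2 ∈ Λ ∧ p.1 = p.2} ≤ κ * dist X Y) :
    ∀ X ∈ Metric.closedBall Xbar (ε / 4),
      Metric.infDist X (Ω ∩ Λ) ≤ (1 + κ) * (Metric.infDist X Ω + Metric.infDist X Λ) :=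
  stmt4_general Ω Λ hΩ hΛ Xbar hXbar κ ε hκ hsub
end

section
/- Let Λ_r^+ = {X ∈ 𝕊_+^n : rank(X) ≤ r}, where 𝕊_+^n is the set of n×n symmetric positive semidefinite matrices, and Λ_r = {X ∈ 𝕊^n : rank(X) ≤ r}. Then for every symmetric matrix Z ∈ 𝕊^n, dist(Z, Λ_r^+) ≤ 2·dist(Z, 𝕊_+^n) + dist(Z, Λ_r), where dist is with respect to the Frobenius norm. -/
/-!
Clipping the negative eigenvalues of a Hermitian `W` to `0` gives a PSD matrix `W⁺` with
`rank W⁺ ≤ rank W`, and `W⁺` is at least as close to any PSD `Y` as `W` is: in an eigenbasis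
of `W` the diagonal of `Y` is nonnegative, so clipping shrinks each diagonal entry of the
difference in absolute value, and conjugation by a unitary preserves the Frobenius norm. Hence
`dist(Y, Λ_r⁺) ≤ dist(Y, Λ_r)` for PSD `Y`, so that for every PSD `Y`
`dist(Z, Λ_r⁺) ≤ dist(Y, Λ_r⁺) + ‖Z - Y‖ ≤ dist(Y, Λ_r) + ‖Z - Y‖ ≤ dist(Z, Λ_r) + 2‖Z - Y‖`,
and it remains to take the infimum over `Y`.
-/

attribute [local instance] Matrix.frobeniusNormedAddCommGroup

open Matrix
open scoped ComplexOrder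

variable {𝕜 : Type*} [RCLike 𝕜] {m n : Type*} [Fintype m] [Fintype n]

theorem Matrix.frobenius_norm_sq_eq_re_trace (A : Matrix m n 𝕜) :
    ‖A‖ ^ 2 = RCLike.re (Aᴴ * A).trace := by
  rw [frobenius_norm_def, ← Real.rpow_natCast, ← Real.rpow_mul (by positivity)]
  norm_num [trace, mul_apply, RCLike.conj_mul, Finset.sum_comm (γ := m)]

theorem Matrix.frobenius_norm_le_of_forall_norm_le
    {A B : Matrix m n 𝕜} (h : ∀ i j, ‖A i j‖ ≤ ‖B i j‖) : ‖A‖ ≤ ‖B‖ := by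
  rw [frobenius_norm_def, frobenius_norm_def]
  gcongr with i _ j _
  exact h i j

theorem Matrix.frobenius_norm_unitary_mul [DecidableEq m] {U : Matrix m m 𝕜}
    (hU : U ∈ unitaryGroup m 𝕜) (A : Matrix m n 𝕜) : ‖U * A‖ = ‖A‖ := by
  rw [← sq_eq_sq₀ (norm_nonneg _) (norm_nonneg _), frobenius_norm_sq_eq_re_trace,
    frobenius_norm_sq_eq_re_trace, conjTranspose_mul, Matrix.mul_assoc, ← Matrix.mul_assoc Uᴴ,
    ← star_eq_conjTranspose, (mem_unitaryGroup_iff'.mp hU), Matrix.one_mul]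

variable [DecidableEq n]

theorem Matrix.frobenius_norm_mul_unitary (A : Matrix m n 𝕜) {U : Matrix n n 𝕜}
    (hU : U ∈ unitaryGroup n 𝕜) : ‖A * U‖ = ‖A‖ := by
  rw [← frobenius_norm_conjTranspose, conjTranspose_mul, ← star_eq_conjTranspose,
    frobenius_norm_unitary_mul (Unitary.star_mem hU), frobenius_norm_conjTranspose]

theorem Matrix.frobenius_norm_sub_diagonal_posPart_le {A : Matrix n n 𝕜}
    (hA : ∀ i, 0 ≤ A i i) (d : n → ℝ) :
    ‖A - diagonal fun i ↦ (((d i)⁺ : ℝ) : 𝕜)‖ ≤ ‖A - diagonal fun i ↦ (d i : 𝕜)‖ := by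
  refine frobenius_norm_le_of_forall_norm_le fun i j ↦ ?_
  rcases eq_or_ne i j with rfl | hij
  · obtain ⟨a, ha, hai⟩ := RCLike.nonneg_iff_exists_ofReal.mp (hA i)
    simp only [sub_apply, diagonal_apply_eq, ← hai, ← RCLike.ofReal_sub, RCLike.norm_ofReal]
    rcases le_total 0 (d i) with hd | hd
    · rw [posPart_of_nonneg hd]
    · rw [posPart_of_nonpos hd]
      exact abs_le_abs (by linarith) (by linarith)
  · simp [diagonal_apply_ne _ hij]

namespace Matrix.IsHermitian

variable {W : Matrix n n 𝕜} (hW : W.IsHermitian)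

noncomputable def posPart : Matrix n n 𝕜 :=
  (hW.eigenvectorUnitary : Matrix n n 𝕜) *
    diagonal (fun i ↦ (((hW.eigenvalues i)⁺ : ℝ) : 𝕜)) * star (hW.eigenvectorUnitary : Matrix n n 𝕜)

theorem posSemidef_posPart : hW.posPart.PosSemidef := by
  have hD : (diagonal fun i ↦ (((hW.eigenvalues i)⁺ : ℝ) : 𝕜)).PosSemidef :=
    posSemidef_diagonal_iff.mpr fun i ↦ RCLike.ofReal_nonneg.mpr (posPart_nonneg _)
  exact hD.mul_mul_conjTranspose_same _

theorem rank_posPart_le : hW.posPart.rank ≤ W.rank := by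
  classical
  calc hW.posPart.rank ≤ (diagonal fun i ↦ (((hW.eigenvalues i)⁺ : ℝ) : 𝕜)).rank :=
        (rank_mul_le_left _ _).trans (rank_mul_le_right _ _)
    _ ≤ W.rank := by
      rw [rank_diagonal, hW.rank_eq_card_non_zero_eigs]
      refine Fintype.card_subtype_mono _ _ fun i hi h0 ↦ hi ?_
      simp [h0]

theorem norm_sub_posPart_le {Y : Matrix n n 𝕜} (hY : Y.PosSemidef) :
    ‖Y - hW.posPart‖ ≤ ‖Y - W‖ := by
  set U : Matrix n n 𝕜 := (hW.eigenvectorUnitary : Matrix n n 𝕜)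
  have hU : U ∈ unitaryGroup n 𝕜 := hW.eigenvectorUnitary.2
  have hnorm (M : Matrix n n 𝕜) : ‖Y - U * M * star U‖ = ‖star U * Y * U - M‖ := by
    have hconj : U * (star U * Y * U - M) * star U =
        U * star U * Y * (U * star U) - U * M * star U := by
      noncomm_ring
    rw [mem_unitaryGroup_iff.mp hU, Matrix.one_mul, Matrix.mul_one] at hconj
    rw [← hconj, frobenius_norm_mul_unitary _ (Unitary.star_mem hU),
      frobenius_norm_unitary_mul hU]
  have hW' : U * diagonal (fun i ↦ (hW.eigenvalues i : 𝕜)) * star U = W := by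
    conv_rhs => rw [hW.spectral_theorem, Unitary.conjStarAlgAut_apply]
    rfl
  have hYU : (star U * Y * U).PosSemidef := by
    simpa only [star_eq_conjTranspose] using hY.conjTranspose_mul_mul_same U
  calc ‖Y - hW.posPart‖
      = ‖star U * Y * U - diagonal fun i ↦ (((hW.eigenvalues i)⁺ : ℝ) : 𝕜)‖ := hnorm _
    _ ≤ ‖star U * Y * U - diagonal fun i ↦ (hW.eigenvalues i : 𝕜)‖ :=
        frobenius_norm_sub_diagonal_posPart_le (fun _ ↦ hYU.diag_nonneg) _
    _ = ‖Y - W‖ := by rw [← hnorm, hW']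

end Matrix.IsHermitian

theorem Metric.infDist_le_two_mul_infDist_add_infDist {α : Type*} [PseudoMetricSpace α]
    {s t u : Set α} (ht : t.Nonempty) (h : ∀ y ∈ t, infDist y s ≤ infDist y u) (x : α) :
    infDist x s ≤ 2 * infDist x t + infDist x u := by
  suffices (infDist x s - infDist x u) / 2 ≤ infDist x t by linarith
  refine (le_infDist ht).mpr fun y hy ↦ ?_
  have hxs := infDist_le_infDist_add_dist (x := x) (y := y) (s := s)
  have hyu := infDist_le_infDist_add_dist (x := y) (y := x) (s := u)
  linarith [h y hy, dist_comm x y]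

theorem Matrix.PosSemidef.infDist_posSemidef_rank_le_le_infDist_isHermitian_rank_le
    {Y : Matrix n n 𝕜} (hY : Y.PosSemidef) (r : ℕ) :
    Metric.infDist Y {X : Matrix n n 𝕜 | X.PosSemidef ∧ X.rank ≤ r} ≤
      Metric.infDist Y {X : Matrix n n 𝕜 | X.IsHermitian ∧ X.rank ≤ r} := by
  have hne : {X : Matrix n n 𝕜 | X.IsHermitian ∧ X.rank ≤ r}.Nonempty :=
    ⟨0, isHermitian_zero, by simp⟩
  refine (Metric.le_infDist hne).mpr fun W ⟨hW, hWr⟩ ↦ ?_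
  have hmem : hW.posPart ∈ {X : Matrix n n 𝕜 | X.PosSemidef ∧ X.rank ≤ r} :=
    ⟨hW.posSemidef_posPart, hW.rank_posPart_le.trans hWr⟩
  calc Metric.infDist Y _ ≤ dist Y hW.posPart := Metric.infDist_le_dist_of_mem hmem
    _ ≤ dist Y W := by simpa only [dist_eq_norm] using hW.norm_sub_posPart_le hY

theorem stmt6_general (n r : ℕ) (Z : Matrix (Fin n) (Fin n) ℝ) :
    Metric.infDist Z {X : Matrix (Fin n) (Fin n) ℝ | X.PosSemidef ∧ X.rank ≤ r} ≤
      2 * Metric.infDist Z {X : Matrix (Fin n) (Fin n) ℝ | X.PosSemidef} +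
        Metric.infDist Z {X : Matrix (Fin n) (Fin n) ℝ | X.IsHermitian ∧ X.rank ≤ r} :=
  Metric.infDist_le_two_mul_infDist_add_infDist ⟨0, PosSemidef.zero⟩
    (fun _ hY ↦ hY.infDist_posSemidef_rank_le_le_infDist_isHermitian_rank_le r) Z

/-- for every symmetric matrix `Z`,
`dist(Z, Λ_r⁺) ≤ 2·dist(Z, 𝕊₊ⁿ) + dist(Z, Λ_r)` in the Frobenius norm, where
`Λ_r⁺` is the set of PSD matrices of rank at most `r`, `𝕊₊ⁿ` the PSD cone and
`Λ_r` the symmetric matrices of rank at most `r`. -/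
theorem stmt6 (n r : ℕ) (Z : Matrix (Fin n) (Fin n) ℝ) (hZ : Z.IsHermitian) :
    Metric.infDist Z {X : Matrix (Fin n) (Fin n) ℝ | X.PosSemidef ∧ X.rank ≤ r} ≤
      2 * Metric.infDist Z {X : Matrix (Fin n) (Fin n) ℝ | X.PosSemidef} +
        Metric.infDist Z {X : Matrix (Fin n) (Fin n) ℝ | X.IsHermitian ∧ X.rank ≤ r} :=
  stmt6_general n r Z
end

section
/- Fix ρ > 0 and let Ω = {Z : |||Z||| ≤ ρ} be the ball of an arbitrary matrix norm |||·||| on 𝕏, with dual norm |||·|||_*. Let X̄ ∈ Ω with rank(X̄) ≤ r. If H ∈ N_{Λ_r}(X̄) satisfies ⟨H, X̄⟩ = 0 and −H ∈ N_Ω(X̄) (i.e. ⟨H, Z − X̄⟩ ≥ 0 for all Z ∈ Ω), then H = 0. Consequently, [−N_Ω(X̄)] ∩ N_{Λ_r}(X̄) = {0}. -/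
attribute [local instance] Matrix.frobeniusNormedAddCommGroup

/-- The trace (Frobenius) inner product of two real matrices. -/
def minner {n m : ℕ} (A B : Matrix (Fin n) (Fin m) ℝ) : ℝ :=
  ∑ i, ∑ j, A i j * B i j

/-- The Fréchet (regular) normal cone to `S` at `x`. -/
def frechetNormalCone {n m : ℕ} (S : Set (Matrix (Fin n) (Fin m) ℝ))
    (x : Matrix (Fin n) (Fin m) ℝ) : Set (Matrix (Fin n) (Fin m) ℝ) :=
  {v | ∀ ε > (0:ℝ), ∃ δ > (0:ℝ), ∀ y ∈ S, dist y x < δ →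
    minner v (y - x) ≤ ε * dist y x}

/-- The limiting (Mordukhovich) normal cone to `S` at `x`. -/
def limitingNormalCone {n m : ℕ} (S : Set (Matrix (Fin n) (Fin m) ℝ))
    (x : Matrix (Fin n) (Fin m) ℝ) : Set (Matrix (Fin n) (Fin m) ℝ) :=
  {v | ∃ xs vs : ℕ → Matrix (Fin n) (Fin m) ℝ,
    (∀ k, xs k ∈ S) ∧ Filter.Tendsto xs Filter.atTop (nhds x) ∧
    Filter.Tendsto vs Filter.atTop (nhds v) ∧
    ∀ k, vs k ∈ frechetNormalCone S (xs k)}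

/-!
Since the rank constraint set is a cone, testing a normal vector `H` at `X̄` against the ray
through `X̄` forces `⟨H, X̄⟩ = 0`, first for Fréchet normals and then, by continuity of the
pairing, for limiting normals. Given `⟨H, X̄⟩ = 0`, the condition `-H ∈ N_Ω(X̄)` says that
`⟨H, Z⟩ ≥ 0` on the whole ball `Ω`, which contains `-t • H` for small `t > 0`; hence
`-t ‖H‖² ≥ 0` and `H = 0`.
-/

attribute [local instance] Matrix.frobeniusNormedSpace

open Filter Topology

section NormalCones

variable {n m : ℕ}

lemma minner_zero_left (B : Matrix (Fin n) (Fin m) ℝ) : minner 0 B = 0 := by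
  simp [minner]

lemma minner_neg_left (A B : Matrix (Fin n) (Fin m) ℝ) : minner (-A) B = -minner A B := by
  simp [minner]

lemma minner_sub_right (A B C : Matrix (Fin n) (Fin m) ℝ) :
    minner A (B - C) = minner A B - minner A C := by
  simp only [minner, Matrix.sub_apply, mul_sub, Finset.sum_sub_distrib]

lemma minner_smul_right (A B : Matrix (Fin n) (Fin m) ℝ) (t : ℝ) :
    minner A (t • B) = t * minner A B := by
  simp only [minner, Matrix.smul_apply, smul_eq_mul, Finset.mul_sum]
  exact Finset.sum_congr rfl fun _ _ => Finset.sum_congr rfl fun _ _ => by ring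

lemma minner_self_eq_norm_sq (A : Matrix (Fin n) (Fin m) ℝ) : minner A A = ‖A‖ ^ 2 := by
  rw [Matrix.frobenius_norm_def, ← Real.sqrt_eq_rpow, Real.sq_sqrt (by positivity)]
  simp [minner, sq]

lemma continuous_minner :
    Continuous fun p : Matrix (Fin n) (Fin m) ℝ × Matrix (Fin n) (Fin m) ℝ => minner p.1 p.2 := by
  unfold minner; fun_prop

lemma zero_mem_frechetNormalCone (S : Set (Matrix (Fin n) (Fin m) ℝ))
    (x : Matrix (Fin n) (Fin m) ℝ) : 0 ∈ frechetNormalCone S x := fun _ _ =>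
  ⟨1, one_pos, fun y _ _ => by rw [minner_zero_left]; positivity⟩

lemma zero_mem_limitingNormalCone {S : Set (Matrix (Fin n) (Fin m) ℝ)}
    {x : Matrix (Fin n) (Fin m) ℝ} (hx : x ∈ S) : 0 ∈ limitingNormalCone S x :=
  ⟨fun _ => x, fun _ => 0, fun _ => hx, tendsto_const_nhds, tendsto_const_nhds,
    fun _ => zero_mem_frechetNormalCone S x⟩

lemma abs_minner_le_of_mem_frechetNormalCone {S : Set (Matrix (Fin n) (Fin m) ℝ)}
    {x v : Matrix (Fin n) (Fin m) ℝ} (hS : ∀ c : ℝ, 0 < c → c • x ∈ S)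
    (hv : v ∈ frechetNormalCone S x) {ε : ℝ} (hε : 0 < ε) : |minner v x| ≤ ε * ‖x‖ := by
  obtain ⟨δ, hδ, hvδ⟩ := hv ε hε
  have hsmall : ∀ᶠ s in 𝓝 (0 : ℝ), s < 1 ∧ s * ‖x‖ < δ :=
    (eventually_lt_nhds one_pos).and <|
      ((continuous_id.mul continuous_const).tendsto' 0 0 (zero_mul _)).eventually_lt_const hδ
  obtain ⟨s, ⟨hs1, hsδ⟩, hs0⟩ := (hsmall.filter_mono nhdsWithin_le_nhds |>.and
    (self_mem_nhdsWithin : Set.Ioi (0 : ℝ) ∈ 𝓝[>] 0)).exists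
  have hray : ∀ t : ℝ, |t| = s → t * minner v x ≤ ε * (s * ‖x‖) := by
    intro t ht
    have hdist : dist ((1 + t) • x) x = s * ‖x‖ := by
      rw [dist_eq_norm, add_smul, one_smul, add_sub_cancel_left, norm_smul, Real.norm_eq_abs, ht]
    have hpos : 0 < 1 + t := by linarith [neg_abs_le t]
    have h := hvδ _ (hS _ hpos) (hdist ▸ hsδ)
    rwa [hdist, add_smul, one_smul, add_sub_cancel_left, minner_smul_right] at h
  have hplus := hray s (abs_of_pos hs0)
  have hminus := hray (-s) (by rw [abs_neg, abs_of_pos hs0])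
  rw [abs_le]
  constructor <;> nlinarith

lemma minner_eq_zero_of_mem_frechetNormalCone {S : Set (Matrix (Fin n) (Fin m) ℝ)}
    {x v : Matrix (Fin n) (Fin m) ℝ} (hS : ∀ c : ℝ, 0 < c → c • x ∈ S)
    (hv : v ∈ frechetNormalCone S x) : minner v x = 0 := by
  have hlim : Tendsto (fun ε : ℝ => ε * ‖x‖) (𝓝[>] 0) (𝓝 0) :=
    ((continuous_id.mul continuous_const).tendsto' 0 0 (zero_mul _)).mono_left
      nhdsWithin_le_nhds
  have hle : |minner v x| ≤ 0 := ge_of_tendsto hlim <|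
    eventually_nhdsWithin_of_forall fun ε hε => abs_minner_le_of_mem_frechetNormalCone hS hv hε
  exact abs_nonpos_iff.mp hle

lemma minner_eq_zero_of_mem_limitingNormalCone {S : Set (Matrix (Fin n) (Fin m) ℝ)}
    (hS : ∀ c : ℝ, 0 < c → ∀ y ∈ S, c • y ∈ S) {x v : Matrix (Fin n) (Fin m) ℝ}
    (hv : v ∈ limitingNormalCone S x) : minner v x = 0 := by
  obtain ⟨xs, vs, hxs, hxlim, hvlim, hvs⟩ := hv
  have hlim := (continuous_minner.tendsto (v, x)).comp (hvlim.prodMk_nhds hxlim)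
  refine tendsto_nhds_unique hlim (tendsto_const_nhds.congr fun k => ?_)
  exact (minner_eq_zero_of_mem_frechetNormalCone (fun c hc => hS c hc _ (hxs k)) (hvs k)).symm

lemma smul_mem_setOf_rank_le {r : ℕ} {c : ℝ} (hc : c ≠ 0) {A : Matrix (Fin n) (Fin m) ℝ}
    (hA : A ∈ {Z : Matrix (Fin n) (Fin m) ℝ | Z.rank ≤ r}) :
    c • A ∈ {Z : Matrix (Fin n) (Fin m) ℝ | Z.rank ≤ r} := by
  simpa [Matrix.rank_smul_of_mem_nonZeroDivisors A (mem_nonZeroDivisors_of_ne_zero hc)] using hA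

lemma eq_zero_of_forall_minner_nonneg {ρ : ℝ} (hρ : 0 < ρ)
    {ν : Matrix (Fin n) (Fin m) ℝ → ℝ} (hνsmul : ∀ (c : ℝ) Z, ν (c • Z) = |c| * ν Z)
    {H : Matrix (Fin n) (Fin m) ℝ} (hH : ∀ Z, ν Z ≤ ρ → 0 ≤ minner H Z) : H = 0 := by
  set t := ρ / (|ν H| + 1)
  have ht0 : 0 < t := by positivity
  have hball : ν ((-t) • H) ≤ ρ := by
    have hρt : t * (|ν H| + 1) = ρ := div_mul_cancel₀ _ (by positivity)
    rw [hνsmul, abs_neg, abs_of_pos ht0]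
    nlinarith [le_abs_self (ν H)]
  have h := hH _ hball
  rw [minner_smul_right, minner_self_eq_norm_sq] at h
  have hsq : ‖H‖ ^ 2 = 0 := le_antisymm (by nlinarith) (sq_nonneg _)
  exact norm_eq_zero.mp (pow_eq_zero_iff two_ne_zero |>.mp hsq)

end NormalCones

theorem stmt10_general (n m r : ℕ) (ρ : ℝ) (hρ : 0 < ρ)
    (ν : Matrix (Fin n) (Fin m) ℝ → ℝ)
    (hνsmul : ∀ (c : ℝ) Z, ν (c • Z) = |c| * ν Z)
    (Xbar : Matrix (Fin n) (Fin m) ℝ) (hXr : Xbar.rank ≤ r) :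
    (∀ H : Matrix (Fin n) (Fin m) ℝ,
      H ∈ limitingNormalCone {Z : Matrix (Fin n) (Fin m) ℝ | Z.rank ≤ r} Xbar →
      minner H Xbar = 0 →
      (∀ Z, ν Z ≤ ρ → 0 ≤ minner H (Z - Xbar)) → H = 0) ∧
    {H : Matrix (Fin n) (Fin m) ℝ | ∀ Z, ν Z ≤ ρ → minner (-H) (Z - Xbar) ≤ 0} ∩
        limitingNormalCone {Z : Matrix (Fin n) (Fin m) ℝ | Z.rank ≤ r} Xbar = {0} := by
  have eq_zero_of_perp :
      ∀ H, minner H Xbar = 0 → (∀ Z, ν Z ≤ ρ → 0 ≤ minner H (Z - Xbar)) → H = 0 :=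
    fun H hperp hball => eq_zero_of_forall_minner_nonneg hρ hνsmul fun Z hZ => by
      simpa [minner_sub_right, hperp] using hball Z hZ
  refine ⟨fun H _ => eq_zero_of_perp H, Set.eq_singleton_iff_unique_mem.mpr ⟨⟨?_, ?_⟩, ?_⟩⟩
  · intro Z _
    rw [neg_zero, minner_zero_left]
  · exact zero_mem_limitingNormalCone hXr
  · rintro H ⟨hball, hcone⟩
    refine eq_zero_of_perp H (minner_eq_zero_of_mem_limitingNormalCone
      (fun c hc _ => smul_mem_setOf_rank_le hc.ne') hcone) fun Z hZ => ?_
    simpa [minner_neg_left] using hball Z hZ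

/-- let `Ω = {Z : ν Z ≤ ρ}` be the ball of an arbitrary matrix norm `ν`
and `X̄ ∈ Ω` with `rank X̄ ≤ r`. If `H ∈ N_{Λ_r}(X̄)` satisfies `⟨H, X̄⟩ = 0` and
`−H ∈ N_Ω(X̄)` (i.e. `⟨H, Z − X̄⟩ ≥ 0` for all `Z ∈ Ω`), then `H = 0`. Consequently
`[−N_Ω(X̄)] ∩ N_{Λ_r}(X̄) = {0}`. -/
theorem stmt10 (n m r : ℕ) (ρ : ℝ) (hρ : 0 < ρ)
    (ν : Matrix (Fin n) (Fin m) ℝ → ℝ)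
    (hν0 : ∀ Z, ν Z = 0 ↔ Z = 0)
    (hνsmul : ∀ (c : ℝ) Z, ν (c • Z) = |c| * ν Z)
    (hνadd : ∀ Z W, ν (Z + W) ≤ ν Z + ν W)
    (Xbar : Matrix (Fin n) (Fin m) ℝ) (hXΩ : ν Xbar ≤ ρ) (hXr : Xbar.rank ≤ r) :
    (∀ H : Matrix (Fin n) (Fin m) ℝ,
      H ∈ limitingNormalCone {Z : Matrix (Fin n) (Fin m) ℝ | Z.rank ≤ r} Xbar →
      minner H Xbar = 0 →
      (∀ Z, ν Z ≤ ρ → 0 ≤ minner H (Z - Xbar)) → H = 0) ∧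
    {H : Matrix (Fin n) (Fin m) ℝ | ∀ Z, ν Z ≤ ρ → minner (-H) (Z - Xbar) ≤ 0} ∩
        limitingNormalCone {Z : Matrix (Fin n) (Fin m) ℝ | Z.rank ≤ r} Xbar = {0} :=
  stmt10_general n m r ρ hρ ν hνsmul Xbar hXr
end

section
/- For every matrix X ∈ 𝕏 and every r ∈ {1,…,n}: ‖X‖_* − ‖X‖_{(r)} = 0 if and only if rank(X) ≤ r, and likewise ‖X‖_* − H_r(X) = 0 if and only if rank(X) ≤ r, where H_r(X) = ∑_{i=1}^{r−1} σ_i(X) + √(∑_{i=r}^n σ_i(X)²). Moreover ‖X‖_* ≥ H_r(X) ≥ ‖X‖_{(r)} always. -/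
open Finset

theorem Finset.sq_sum_eq_sum_sq_add_sum_offDiag {ι R : Type*} [CommSemiring R] [DecidableEq ι]
    (s : Finset ι) (f : ι → R) :
    (∑ i ∈ s, f i) ^ 2 = ∑ i ∈ s, f i ^ 2 + ∑ p ∈ s.offDiag, f p.1 * f p.2 := by
  rw [sq, sum_mul_sum, ← sum_product', ← diag_union_offDiag, sum_union (disjoint_diag_offDiag s),
    sum_diag]
  simp only [sq]

section SqrtSumSq

variable {ι : Type*} {s : Finset ι} {f : ι → ℝ}

theorem Finset.mul_nonneg_of_mem_offDiag (hf : ∀ i ∈ s, 0 ≤ f i) :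
    ∀ p ∈ s.offDiag, 0 ≤ f p.1 * f p.2 := fun p hp => by
  rw [mem_offDiag] at hp
  exact mul_nonneg (hf _ hp.1) (hf _ hp.2.1)

theorem Real.sqrt_sum_sq_le_sum (hf : ∀ i ∈ s, 0 ≤ f i) : √(∑ i ∈ s, f i ^ 2) ≤ ∑ i ∈ s, f i := by
  classical
  refine Real.sqrt_le_iff.2 ⟨sum_nonneg hf, ?_⟩
  rw [sq_sum_eq_sum_sq_add_sum_offDiag]
  exact le_add_of_nonneg_right (sum_nonneg (mul_nonneg_of_mem_offDiag hf))

theorem Real.sqrt_sum_sq_eq_sum_iff [DecidableEq ι] (hf : ∀ i ∈ s, 0 ≤ f i) :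
    √(∑ i ∈ s, f i ^ 2) = ∑ i ∈ s, f i ↔ ∀ p ∈ s.offDiag, f p.1 * f p.2 = 0 := by
  rw [Real.sqrt_eq_iff_eq_sq (sum_nonneg fun i _ => sq_nonneg _) (sum_nonneg hf),
    sq_sum_eq_sum_sq_add_sum_offDiag, left_eq_add,
    sum_eq_zero_iff_of_nonneg (mul_nonneg_of_mem_offDiag hf)]

end SqrtSumSq

section OrderedSingularValues

variable {n : ℕ} {σ : Fin n → ℝ}

noncomputable def kyFanSum (σ : Fin n → ℝ) (r : ℕ) : ℝ := ∑ i with i.1 < r, σ i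

/-- The paper's `H_r = ∑_{i=1}^{r-1} σ_i + √(∑_{i=r}^n σ_i²)`, with `σ` indexed from `0`. -/
noncomputable def hSum (σ : Fin n → ℝ) (r : ℕ) : ℝ :=
  ∑ i with i.1 < r - 1, σ i + √(∑ i with r - 1 ≤ i.1, σ i ^ 2)

theorem card_filter_ne_zero_le_iff_of_antitone (hmono : Antitone σ) (hnonneg : ∀ i, 0 ≤ σ i)
    (r : ℕ) : #{i | σ i ≠ 0} ≤ r ↔ ∀ i : Fin n, r ≤ i.1 → σ i = 0 := by
  constructor
  · intro hcard i hi
    by_contra hne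
    have hpos : 0 < σ i := (hnonneg i).lt_of_ne' hne
    have hsub : Iic i ⊆ ({j | σ j ≠ 0} : Finset (Fin n)) := fun j hj =>
      mem_filter.2 ⟨mem_univ j, (hpos.trans_le (hmono (mem_Iic.1 hj))).ne'⟩
    have := (card_le_card hsub).trans hcard
    rw [Fin.card_Iic] at this
    omega
  · intro hz
    calc #{i | σ i ≠ 0} ≤ #{i : Fin n | i < r} :=
          card_le_card fun i hi => by
            simp only [mem_filter, mem_univ, true_and] at hi ⊢
            exact lt_of_not_ge fun h => hi (hz i h)
      _ ≤ r := by rw [Fin.card_filter_val_lt]; exact min_le_right n r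

theorem sum_filter_lt_add_sum_filter_le (σ : Fin n → ℝ) (k : ℕ) :
    ∑ i with i.1 < k, σ i + ∑ i with k ≤ i.1, σ i = ∑ i, σ i := by
  simp_rw [← not_lt]
  exact sum_filter_add_sum_filter_not _ _ _

theorem kyFanSum_le_hSum {r : ℕ} (hr1 : 1 ≤ r) (hrn : r ≤ n) : kyFanSum σ r ≤ hSum σ r := by
  obtain ⟨k, rfl⟩ := Nat.exists_eq_add_of_le' hr1
  let j : Fin n := ⟨k, hrn⟩
  have hsplit : univ.filter (fun i : Fin n => i.1 < k + 1) =
      insert j (univ.filter fun i : Fin n => i.1 < k) := by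
    ext i
    simp [j, Fin.ext_iff]
    omega
  have hj : σ j ≤ √(∑ i with k ≤ i.1, σ i ^ 2) :=
    (le_abs_self _).trans <| Real.abs_le_sqrt <|
      single_le_sum (f := fun i => σ i ^ 2) (fun i _ => sq_nonneg _) (by simp [j])
  rw [kyFanSum, hSum, hsplit, sum_insert (by simp [j]), Nat.add_sub_cancel]
  linarith

theorem hSum_le_sum (hnonneg : ∀ i, 0 ≤ σ i) (r : ℕ) : hSum σ r ≤ ∑ i, σ i := by
  rw [hSum, ← sum_filter_lt_add_sum_filter_le σ (r - 1)]
  exact add_le_add_right (Real.sqrt_sum_sq_le_sum fun i _ => hnonneg i) _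

theorem sum_sub_kyFanSum_eq_zero_iff (hnonneg : ∀ i, 0 ≤ σ i) (r : ℕ) :
    ∑ i, σ i - kyFanSum σ r = 0 ↔ ∀ i : Fin n, r ≤ i.1 → σ i = 0 := by
  rw [kyFanSum, ← sum_filter_lt_add_sum_filter_le σ r, add_sub_cancel_left,
    sum_eq_zero_iff_of_nonneg fun i _ => hnonneg i]
  simp

theorem sum_sub_hSum_eq_zero_iff (hmono : Antitone σ) (hnonneg : ∀ i, 0 ≤ σ i) {r : ℕ}
    (hr1 : 1 ≤ r) (hrn : r ≤ n) :
    ∑ i, σ i - hSum σ r = 0 ↔ ∀ i : Fin n, r ≤ i.1 → σ i = 0 := by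
  obtain ⟨k, rfl⟩ := Nat.exists_eq_add_of_le' hr1
  rw [hSum, Nat.add_sub_cancel, ← sum_filter_lt_add_sum_filter_le σ k, add_sub_add_left_eq_sub,
    sub_eq_zero, eq_comm, Real.sqrt_sum_sq_eq_sum_iff fun i _ => hnonneg i]
  constructor
  · intro h i hi
    let j : Fin n := ⟨k, hrn⟩
    have hij : σ i ≤ σ j := hmono (Fin.le_def.2 (by simp [j]; omega))
    rcases mul_eq_zero.1 (h (j, i) (by simp [j, Fin.ext_iff]; omega)) with hj | hi
    · exact le_antisymm (hij.trans hj.le) (hnonneg i)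
    · exact hi
  · rintro h ⟨a, b⟩ hab
    simp only [mem_offDiag, mem_filter, mem_univ, true_and, ne_eq, Fin.ext_iff] at hab
    rcases lt_or_gt_of_ne hab.2.2 with hlt | hlt
    · rw [h b (by omega), mul_zero]
    · rw [h a (by omega), zero_mul]

end OrderedSingularValues

theorem stmt14_general (n m r : ℕ) (hr1 : 1 ≤ r) (hrn : r ≤ n)
    (X : Matrix (Fin n) (Fin m) ℝ) (σ : Fin n → ℝ)
    (hmono : Antitone σ) (hnonneg : ∀ i, 0 ≤ σ i)
    (hrank : X.rank = (Finset.univ.filter fun i : Fin n => σ i ≠ 0).card) :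
    ((∑ i, σ i) - (∑ i ∈ Finset.univ.filter (fun i : Fin n => i.1 < r), σ i) = 0 ↔
        X.rank ≤ r) ∧
    ((∑ i, σ i) -
        ((∑ i ∈ Finset.univ.filter (fun i : Fin n => i.1 < r - 1), σ i) +
          Real.sqrt (∑ i ∈ Finset.univ.filter (fun i : Fin n => r - 1 ≤ i.1), (σ i) ^ 2))
        = 0 ↔ X.rank ≤ r) ∧
    (∑ i ∈ Finset.univ.filter (fun i : Fin n => i.1 < r), σ i) ≤
      (∑ i ∈ Finset.univ.filter (fun i : Fin n => i.1 < r - 1), σ i) +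
        Real.sqrt (∑ i ∈ Finset.univ.filter (fun i : Fin n => r - 1 ≤ i.1), (σ i) ^ 2) ∧
    (∑ i ∈ Finset.univ.filter (fun i : Fin n => i.1 < r - 1), σ i) +
        Real.sqrt (∑ i ∈ Finset.univ.filter (fun i : Fin n => r - 1 ≤ i.1), (σ i) ^ 2) ≤
      ∑ i, σ i := by
  have hrank_le : X.rank ≤ r ↔ ∀ i : Fin n, r ≤ i.1 → σ i = 0 := by
    rw [hrank]
    exact card_filter_ne_zero_le_iff_of_antitone hmono hnonneg r
  exact ⟨(sum_sub_kyFanSum_eq_zero_iff hnonneg r).trans hrank_le.symm,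
    (sum_sub_hSum_eq_zero_iff hmono hnonneg hr1 hrn).trans hrank_le.symm,
    kyFanSum_le_hSum hr1 hrn, hSum_le_sum hnonneg r⟩

/-- let `σ 0 ≥ σ 1 ≥ ⋯ ≥ σ (n-1) ≥ 0` be the ordered singular values of
`X` (so `rank X` is the number of nonzero `σ i`), and let
`H_r(X) = ∑_{i<r-1} σ i + √(∑_{i≥r-1} σ i²)` (1-indexed: `∑_{i=1}^{r-1} σ_i +
√(∑_{i=r}^n σ_i²)`). Then `‖X‖_* − ‖X‖_{(r)} = 0 ↔ rank X ≤ r`,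
`‖X‖_* − H_r(X) = 0 ↔ rank X ≤ r`, and `‖X‖_{(r)} ≤ H_r(X) ≤ ‖X‖_*`. -/
theorem stmt14 (n m r : ℕ) (hnm : n ≤ m) (hr1 : 1 ≤ r) (hrn : r ≤ n)
    (X : Matrix (Fin n) (Fin m) ℝ) (σ : Fin n → ℝ)
    (hperm : ∃ e : Equiv.Perm (Fin n), ∀ i, σ i = singVals X (e i))
    (hmono : Antitone σ) (hnonneg : ∀ i, 0 ≤ σ i)
    (hrank : X.rank = (Finset.univ.filter fun i : Fin n => σ i ≠ 0).card) :
    ((∑ i, σ i) - (∑ i ∈ Finset.univ.filter (fun i : Fin n => i.1 < r), σ i) = 0 ↔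
        X.rank ≤ r) ∧
    ((∑ i, σ i) -
        ((∑ i ∈ Finset.univ.filter (fun i : Fin n => i.1 < r - 1), σ i) +
          Real.sqrt (∑ i ∈ Finset.univ.filter (fun i : Fin n => r - 1 ≤ i.1), (σ i) ^ 2))
        = 0 ↔ X.rank ≤ r) ∧
    (∑ i ∈ Finset.univ.filter (fun i : Fin n => i.1 < r), σ i) ≤
      (∑ i ∈ Finset.univ.filter (fun i : Fin n => i.1 < r - 1), σ i) +
        Real.sqrt (∑ i ∈ Finset.univ.filter (fun i : Fin n => r - 1 ≤ i.1), (σ i) ^ 2) ∧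
    (∑ i ∈ Finset.univ.filter (fun i : Fin n => i.1 < r - 1), σ i) +
        Real.sqrt (∑ i ∈ Finset.univ.filter (fun i : Fin n => r - 1 ≤ i.1), (σ i) ^ 2) ≤
      ∑ i, σ i :=
  stmt14_general n m r hr1 hrn X σ hmono hnonneg hrank
end

section
/- Suppose the penalized problem min_{X∈Ω} f(X) + ρ·(‖X‖_* − ‖X‖_{(r)}) is a global exact penalty for min_{X∈Ω, rank(X)≤r} f(X): there is ρ̄ > 0 such that for every ρ > ρ̄ the two problems have the same global minimizers. Then for any p ∈ (0,1), there is ρ' > 0 such that for every ρ > ρ', every global minimizer of min_{X∈Ω} f(X) + ρ·∑_{i=r+1}^n σ_i(X)^p is a global minimizer of min_{X∈Ω, rank(X)≤r} f(X), and conversely; i.e., the Schatten-p truncated penalty is also a global exact penalty. -/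
/-!
A minimizer `X` of `f + ρ ∑_{i ≥ r} σ_i^p` over `Ω` is compared with a rank-`r` minimizer `X⋆`
of `f`, at which both penalties vanish: since `f ≥ c` on `Ω`, once `ρ > f X⋆ - c` we get
`∑_{i ≥ r} σ_i(X)^p ≤ 1`, so every tail singular value lies in `[0, 1]`, where `t ≤ t^p`.
Hence the `p`-penalty dominates the exact `1`-penalty at `X`, and the two penalized problems
have the same minimizers, namely those of the rank-constrained problem.
-/

open Finset

theorem setOf_isMinOn_eq_of_le {α β : Type*} [Preorder β] {φ ψ : α → β} {s : Set α}
    (hψφ : ∀ x ∈ s, IsMinOn φ s x → ψ x ≤ φ x) (hφψ : ∀ x ∈ s, IsMinOn ψ s x → φ x ≤ ψ x)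
    (hφ : ∃ a ∈ s, IsMinOn φ s a) (hψ : ∃ b ∈ s, IsMinOn ψ s b) :
    {x | x ∈ s ∧ IsMinOn φ s x} = {x | x ∈ s ∧ IsMinOn ψ s x} := by
  obtain ⟨a, has, ha⟩ := hφ
  obtain ⟨b, hbs, hb⟩ := hψ
  ext x
  constructor
  · rintro ⟨hxs, hx⟩
    refine ⟨hxs, fun z hz => ?_⟩
    calc ψ x ≤ φ x := hψφ x hxs hx
      _ ≤ φ b := hx hbs
      _ ≤ ψ b := hφψ b hbs hb
      _ ≤ ψ z := hb hz
  · rintro ⟨hxs, hx⟩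
    refine ⟨hxs, fun z hz => ?_⟩
    calc φ x ≤ ψ x := hφψ x hxs hx
      _ ≤ ψ a := hx has
      _ ≤ φ a := hψφ a has ha
      _ ≤ φ z := ha hz

theorem penalty_le_one_of_isMinOn {α : Type*} {f h : α → ℝ} {s : Set α} {c ρ : ℝ} {x y : α}
    (hc : ∀ z ∈ s, c ≤ f z) (hρ : f y - c ≤ ρ) (hρ0 : 0 < ρ) (hxs : x ∈ s)
    (hx : IsMinOn (fun z => f z + ρ * h z) s x) (hys : y ∈ s) (hy : h y = 0) : h x ≤ 1 := by
  have hxy : f x + ρ * h x ≤ f y + ρ * h y := hx hys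
  have hcx := hc x hxs
  rw [hy, mul_zero, add_zero] at hxy
  nlinarith

theorem Real.self_le_rpow_of_rpow_le_one {x p : ℝ} (hx : 0 ≤ x) (hp0 : 0 < p) (hp1 : p ≤ 1)
    (h : x ^ p ≤ 1) : x ≤ x ^ p := by
  refine Real.self_le_rpow_of_le_one hx (not_lt.mp fun hx1 => ?_) hp1
  exact (Real.one_lt_rpow hx1 hp0).not_ge h

theorem Finset.sum_le_sum_rpow_of_sum_rpow_le_one {ι : Type*} {s : Finset ι} {t : ι → ℝ}
    {p : ℝ} (ht : ∀ i ∈ s, 0 ≤ t i) (hp0 : 0 < p) (hp1 : p ≤ 1)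
    (h : ∑ i ∈ s, t i ^ p ≤ 1) : ∑ i ∈ s, t i ≤ ∑ i ∈ s, t i ^ p := by
  refine sum_le_sum fun i hi => Real.self_le_rpow_of_rpow_le_one (ht i hi) hp0 hp1 ?_
  exact (single_le_sum (fun j hj => Real.rpow_nonneg (ht j hj) p) hi).trans h

theorem stmt15_general (n m r : ℕ)
    (Ω : Set (Matrix (Fin n) (Fin m) ℝ))
    (f : Matrix (Fin n) (Fin m) ℝ → ℝ)
    (σ : Matrix (Fin n) (Fin m) ℝ → Fin n → ℝ)
    (hnonneg : ∀ X i, 0 ≤ σ X i)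
    (hrankσ : ∀ X : Matrix (Fin n) (Fin m) ℝ,
      X.rank ≤ r ↔ ∀ i : Fin n, r ≤ i.1 → σ X i = 0)
    (hlb : ∃ c : ℝ, ∀ X ∈ Ω, c ≤ f X)
    (hexact : ∃ ρbar > (0:ℝ), ∀ ρ > ρbar,
      {X | X ∈ Ω ∧ IsMinOn
          (fun Z => f Z + ρ * ∑ i ∈ Finset.univ.filter (fun i : Fin n => r ≤ i.1), σ Z i)
          Ω X} =
      {X | X ∈ {Z ∈ Ω | Z.rank ≤ r} ∧ IsMinOn f {Z ∈ Ω | Z.rank ≤ r} X})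
    (p : ℝ) (hp0 : 0 < p) (hp1 : p < 1)
    (hattain : ∀ ρ > (0:ℝ), ∃ X ∈ Ω, IsMinOn
      (fun Z => f Z + ρ * ∑ i ∈ Finset.univ.filter (fun i : Fin n => r ≤ i.1), (σ Z i) ^ p)
      Ω X)
    (hattainΓ : ∃ X ∈ {Z ∈ Ω | Z.rank ≤ r}, IsMinOn f {Z ∈ Ω | Z.rank ≤ r} X) :
    ∃ ρ' > (0:ℝ), ∀ ρ > ρ',
      {X | X ∈ Ω ∧ IsMinOn
          (fun Z => f Z + ρ * ∑ i ∈ Finset.univ.filter (fun i : Fin n => r ≤ i.1), (σ Z i) ^ p)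
          Ω X} =
      {X | X ∈ {Z ∈ Ω | Z.rank ≤ r} ∧ IsMinOn f {Z ∈ Ω | Z.rank ≤ r} X} := by
  obtain ⟨c, hc⟩ := hlb
  obtain ⟨ρbar, hρbar, hexact⟩ := hexact
  obtain ⟨Xs, hXsΓ, hXs⟩ := hattainΓ
  refine ⟨max ρbar (f Xs - c), lt_max_of_lt_left hρbar, fun ρ hρ => ?_⟩
  have hρbarρ : ρbar < ρ := (le_max_left _ _).trans_lt hρ
  have hρ0 : 0 < ρ := hρbar.trans hρbarρ
  have hexactρ := Set.ext_iff.mp (hexact ρ hρbarρ)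
  have tail_eq_zero : ∀ X : Matrix (Fin n) (Fin m) ℝ, X.rank ≤ r →
      ∀ i ∈ univ.filter (fun i : Fin n => r ≤ i.1), σ X i = 0 :=
    fun X hX i hi => (hrankσ X).mp hX i (mem_filter.mp hi).2
  have tail_rpow_eq_zero : ∀ X : Matrix (Fin n) (Fin m) ℝ, X.rank ≤ r →
      ∑ i ∈ univ.filter (fun i : Fin n => r ≤ i.1), σ X i ^ p = 0 := fun X hX =>
    sum_eq_zero fun i hi => by rw [tail_eq_zero X hX i hi, Real.zero_rpow hp0.ne']
  rw [← hexact ρ hρbarρ]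
  refine setOf_isMinOn_eq_of_le (fun X hX hXmin => ?_) (fun X hX hXmin => ?_)
    (hattain ρ hρ0) ⟨Xs, hXsΓ.1, ((hexactρ Xs).mpr ⟨hXsΓ, hXs⟩).2⟩
  · have hsum := penalty_le_one_of_isMinOn
      (h := fun Z => ∑ i ∈ univ.filter (fun i : Fin n => r ≤ i.1), σ Z i ^ p) hc
      ((le_max_right _ _).trans hρ.le) hρ0 hX hXmin
      hXsΓ.1 (tail_rpow_eq_zero Xs hXsΓ.2)
    have hdom := sum_le_sum_rpow_of_sum_rpow_le_one (fun i _ => hnonneg X i) hp0 hp1.le hsum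
    gcongr
  · have hXr : X.rank ≤ r := ((hexactρ X).mp ⟨hX, hXmin⟩).1.2
    simp only [sum_eq_zero (tail_eq_zero X hXr), tail_rpow_eq_zero X hXr, le_refl]

/-- suppose the penalty `f + ρ·∑_{i>r} σ_i` is a global exact penalty
for `min {f(X) : X ∈ Ω, rank X ≤ r}` (for all `ρ` beyond a threshold the argmin sets
coincide). Then for any `p ∈ (0,1)` the Schatten-`p` truncated penalty
`f + ρ·∑_{i>r} σ_i^p` is also a global exact penalty: beyond some threshold `ρ'`, the
global minimizers of the penalized problem are exactly the global minimizers of the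
rank-constrained problem. Here `σ : 𝕏 → Fin n → ℝ` gives the singular values in
nonincreasing order. -/
theorem stmt15 (n m r : ℕ) (hr1 : 1 ≤ r) (hrn : r ≤ n)
    (Ω : Set (Matrix (Fin n) (Fin m) ℝ)) (hΩ : IsClosed Ω)
    (f : Matrix (Fin n) (Fin m) ℝ → ℝ)
    (σ : Matrix (Fin n) (Fin m) ℝ → Fin n → ℝ)
    (hperm : ∀ X, ∃ e : Equiv.Perm (Fin n), ∀ i, σ X i = singVals X (e i))
    (hmono : ∀ X, Antitone (σ X)) (hnonneg : ∀ X i, 0 ≤ σ X i)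
    (hrankσ : ∀ X : Matrix (Fin n) (Fin m) ℝ,
      X.rank ≤ r ↔ ∀ i : Fin n, r ≤ i.1 → σ X i = 0)
    (hlb : ∃ c : ℝ, ∀ X ∈ Ω, c ≤ f X)
    (hexact : ∃ ρbar > (0:ℝ), ∀ ρ > ρbar,
      {X | X ∈ Ω ∧ IsMinOn
          (fun Z => f Z + ρ * ∑ i ∈ Finset.univ.filter (fun i : Fin n => r ≤ i.1), σ Z i)
          Ω X} =
      {X | X ∈ {Z ∈ Ω | Z.rank ≤ r} ∧ IsMinOn f {Z ∈ Ω | Z.rank ≤ r} X})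
    (p : ℝ) (hp0 : 0 < p) (hp1 : p < 1)
    (hattain : ∀ ρ > (0:ℝ), ∃ X ∈ Ω, IsMinOn
      (fun Z => f Z + ρ * ∑ i ∈ Finset.univ.filter (fun i : Fin n => r ≤ i.1), (σ Z i) ^ p)
      Ω X)
    (hattainΓ : ∃ X ∈ {Z ∈ Ω | Z.rank ≤ r}, IsMinOn f {Z ∈ Ω | Z.rank ≤ r} X) :
    ∃ ρ' > (0:ℝ), ∀ ρ > ρ',
      {X | X ∈ Ω ∧ IsMinOn
          (fun Z => f Z + ρ * ∑ i ∈ Finset.univ.filter (fun i : Fin n => r ≤ i.1), (σ Z i) ^ p)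
          Ω X} =
      {X | X ∈ {Z ∈ Ω | Z.rank ≤ r} ∧ IsMinOn f {Z ∈ Ω | Z.rank ≤ r} X} :=
  stmt15_general n m r Ω f σ hnonneg hrankσ hlb hexact p hp0 hp1 hattain hattainΓ
end
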